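/- Let k ∈ ℤ, let p ∈ ℍ with y = Im p, and for z ∈ ℍ write w = w(p;z) and s_n(z) = Σ_{t=0}^{n} (−1)^{n−t}·C(n,t)·(1−w)^t/(y^t·(Im z)^{n−t}). Then for all integers 0 ≤ r ≤ m and all z ∈ ℍ, (1/(2πi))·(∂_z s_{m−r})(z) + (k+2r)·s_{m−r}(z)·(1−w)/(4πy) − (k+2m)·s_{m−r}(z)/(4π·Im z) = ((k+m+r)/(4π))·s_{m+1−r}(z). -/

import Mathlib

open Complex

/-- The map `w(p; ·) : z ↦ (z − p)/(z − conj p)` from the upper half-plane to the unit disc. -/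
noncomputable def wmap (p z : ℂ) : ℂ := (z - p) / (z - (starRingEnd ℂ) p)

/-- The Wirtinger derivative `∂_z = (1/2)(∂/∂x − i ∂/∂y)` of `f : ℂ → ℂ` at `z`. -/
noncomputable def wirtingerDeriv (f : ℂ → ℂ) (z : ℂ) : ℂ :=
  (1 / 2) * (fderiv ℝ f z 1 - Complex.I * fderiv ℝ f z Complex.I)

/-- The auxiliary function `s_n(z) = Σ_{t=0}^n (−1)^{n−t} C(n,t) (1−w)^t/(y^t (Im z)^{n−t})`
where `w = w(p;z)` and `y = Im p`. -/
noncomputable def sfun (p : ℂ) (n : ℕ) (z : ℂ) : ℂ :=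
  ∑ t ∈ Finset.range (n + 1),
    (-1) ^ (n - t) * (n.choose t : ℂ) * (1 - wmap p z) ^ t /
      ((p.im : ℂ) ^ t * (z.im : ℂ) ^ (n - t))

/-!
Write `u = (1 - w)/y` and `v = 1/Im z`. The binomial theorem gives `s_n = (u - v)^n`. Since
`1 - w = 2iy/(z - conj p)`, `u = 2i/(z - conj p)` is holomorphic with `∂u = (i/2) u²`, and
`∂v = -v² ∂(Im z) = (i/2) v²`. Hence `∂ s_n = n (i/2)(u + v) s_n`, and with `m = r + n` the
recurrence reduces to the identity `n(u + v) + (k + 2r)u - (k + 2r + 2n)v = (k + 2r + n)(u - v)`.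
-/

open scoped ComplexConjugate

theorem HasFDerivAt.wirtingerDeriv_eq {f : ℂ → ℂ} {L : ℂ →L[ℝ] ℂ} {z : ℂ}
    (h : HasFDerivAt f L z) : wirtingerDeriv f z = (1 / 2) * (L 1 - I * L I) := by
  rw [wirtingerDeriv, h.fderiv]

theorem HasDerivAt.wirtingerDeriv_eq {f : ℂ → ℂ} {f' z : ℂ} (h : HasDerivAt f f' z) :
    wirtingerDeriv f z = f' := by
  rw [(h.hasFDerivAt.restrictScalars ℝ).wirtingerDeriv_eq]
  simp only [ContinuousLinearMap.coe_restrictScalars', ContinuousLinearMap.toSpanSingleton_apply,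
    smul_eq_mul]
  linear_combination (-f' / 2) * I_sq

theorem wirtingerDeriv_sub {f g : ℂ → ℂ} {z : ℂ} (hf : DifferentiableAt ℝ f z)
    (hg : DifferentiableAt ℝ g z) :
    wirtingerDeriv (fun z => f z - g z) z = wirtingerDeriv f z - wirtingerDeriv g z := by
  refine (hf.hasFDerivAt.sub hg.hasFDerivAt).wirtingerDeriv_eq.trans ?_
  simp only [wirtingerDeriv, sub_apply]
  ring

theorem HasDerivAt.wirtingerDeriv_comp {g f : ℂ → ℂ} {g' z : ℂ} (hg : HasDerivAt g g' (f z))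
    (hf : DifferentiableAt ℝ f z) :
    wirtingerDeriv (fun z => g (f z)) z = g' * wirtingerDeriv f z := by
  refine ((hg.hasFDerivAt.restrictScalars ℝ).comp z hf.hasFDerivAt).wirtingerDeriv_eq.trans ?_
  simp only [wirtingerDeriv, ContinuousLinearMap.coe_comp, Function.comp_apply,
    ContinuousLinearMap.coe_restrictScalars', ContinuousLinearMap.toSpanSingleton_apply,
    smul_eq_mul]
  ring

theorem differentiableAt_ofReal_im (z : ℂ) : DifferentiableAt ℝ (fun z : ℂ => (z.im : ℂ)) z :=
  (ofRealCLM.comp imCLM).differentiableAt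

theorem wirtingerDeriv_ofReal_im (z : ℂ) :
    wirtingerDeriv (fun z : ℂ => (z.im : ℂ)) z = -I / 2 := by
  refine (ofRealCLM.comp imCLM).hasFDerivAt.wirtingerDeriv_eq.trans ?_
  simp only [ContinuousLinearMap.coe_comp, Function.comp_apply, imCLM_apply, ofRealCLM_apply,
    one_im, I_im, ofReal_zero, ofReal_one]
  ring

theorem wirtingerDeriv_inv_ofReal_im {z : ℂ} (hz : z.im ≠ 0) :
    wirtingerDeriv (fun z : ℂ => (z.im : ℂ)⁻¹) z = I / 2 * ((z.im : ℂ)⁻¹) ^ 2 := by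
  have hz' : (z.im : ℂ) ≠ 0 := ofReal_ne_zero.mpr hz
  rw [(hasDerivAt_inv hz').wirtingerDeriv_comp (differentiableAt_ofReal_im z),
    wirtingerDeriv_ofReal_im]
  field_simp

theorem one_sub_wmap_div_im {p z : ℂ} (hp : p.im ≠ 0) (hz : z ≠ conj p) :
    (1 - wmap p z) / p.im = 2 * I / (z - conj p) := by
  have hD : z - conj p ≠ 0 := sub_ne_zero.mpr hz
  have hp' : (p.im : ℂ) ≠ 0 := ofReal_ne_zero.mpr hp
  rw [wmap, div_eq_div_iff hp' hD, one_sub_div hD, div_mul_cancel₀ _ hD, sub_sub_sub_cancel_left,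
    sub_conj]
  push_cast
  ring

theorem hasDerivAt_one_sub_wmap_div_im {p z : ℂ} (hp : p.im ≠ 0) (hz : z ≠ conj p) :
    HasDerivAt (fun z => (1 - wmap p z) / p.im) (I / 2 * ((1 - wmap p z) / p.im) ^ 2) z := by
  have hD : z - conj p ≠ 0 := sub_ne_zero.mpr hz
  have hmobius : HasDerivAt (fun z => 2 * I / (z - conj p))
      (I / 2 * (2 * I / (z - conj p)) ^ 2) z := by
    refine ((hasDerivAt_const z (2 * I)).fun_div ((hasDerivAt_id' z).sub_const (conj p))
      hD).congr_deriv ?_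
    field_simp
    linear_combination (-2 * I) * I_sq
  have heq : (fun z => (1 - wmap p z) / p.im) =ᶠ[nhds z] fun z => 2 * I / (z - conj p) :=
    (isOpen_ne.eventually_mem hz).mono fun w hw => one_sub_wmap_div_im hp hw
  rw [one_sub_wmap_div_im hp hz]
  exact hmobius.congr_of_eventuallyEq heq

theorem sfun_eq_pow (p : ℂ) (n : ℕ) (z : ℂ) :
    sfun p n z = ((1 - wmap p z) / p.im - (z.im : ℂ)⁻¹) ^ n := by
  rw [sfun, sub_eq_add_neg (_ / _), add_pow]
  refine Finset.sum_congr rfl fun t _ => ?_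
  rw [div_pow]
  ring

theorem wirtingerDeriv_sfun {p z : ℂ} (hp : p.im ≠ 0) (hz : z.im ≠ 0) (hzp : z ≠ conj p)
    (n : ℕ) :
    wirtingerDeriv (sfun p n) z =
      n * (I / 2) * ((1 - wmap p z) / p.im + (z.im : ℂ)⁻¹) * sfun p n z := by
  have hu := hasDerivAt_one_sub_wmap_div_im hp hzp
  have hu' := hu.differentiableAt.restrictScalars ℝ
  have hv : DifferentiableAt ℝ (fun z : ℂ => (z.im : ℂ)⁻¹) z :=
    (differentiableAt_ofReal_im z).inv (ofReal_ne_zero.mpr hz)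
  have hbase : DifferentiableAt ℝ (fun z => (1 - wmap p z) / p.im - (z.im : ℂ)⁻¹) z :=
    hu'.sub hv
  have hs : sfun p n = fun z => ((1 - wmap p z) / p.im - (z.im : ℂ)⁻¹) ^ n :=
    funext (sfun_eq_pow p n)
  rw [hs, (hasDerivAt_pow n _).wirtingerDeriv_comp hbase,
    wirtingerDeriv_sub hu' hv, hu.wirtingerDeriv_eq,
    wirtingerDeriv_inv_ofReal_im hz]
  rcases n with _ | n
  · simp
  · push_cast
    ring

theorem sfun_recurrence (k : ℤ) (p : ℂ) (hp : 0 < p.im)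
    (m r : ℕ) (hrm : r ≤ m) (z : ℂ) (hz : 0 < z.im) :
    (1 / (2 * (Real.pi : ℂ) * Complex.I)) * wirtingerDeriv (sfun p (m - r)) z +
        ((k : ℂ) + 2 * r) * sfun p (m - r) z * (1 - wmap p z) /
          (4 * (Real.pi : ℂ) * (p.im : ℂ)) -
        ((k : ℂ) + 2 * m) * sfun p (m - r) z / (4 * (Real.pi : ℂ) * (z.im : ℂ)) =
      (((k : ℂ) + m + r) / (4 * (Real.pi : ℂ))) * sfun p (m + 1 - r) z := by
  have hzp : z ≠ conj p := fun h => by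
    have := congrArg im h
    rw [conj_im] at this
    linarith
  obtain ⟨n, rfl⟩ : ∃ n, m = r + n := ⟨m - r, by omega⟩
  rw [show r + n - r = n by omega, show r + n + 1 - r = n + 1 by omega,
    wirtingerDeriv_sfun hp.ne' hz.ne' hzp, sfun_eq_pow, sfun_eq_pow, pow_succ]
  have hπ : (Real.pi : ℂ) ≠ 0 := ofReal_ne_zero.mpr Real.pi_ne_zero
  have hy : (p.im : ℂ) ≠ 0 := ofReal_ne_zero.mpr hp.ne'
  have hY : (z.im : ℂ) ≠ 0 := ofReal_ne_zero.mpr hz.ne'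
  generalize ((1 - wmap p z) / p.im - (z.im : ℂ)⁻¹) ^ n = B
  push_cast
  field_simp
  ring
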